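/- Let H : ℝ → ℝ be a bounded Lipschitz function with Lipschitz constant α. Then for any real-valued random variables X⁰ and Y⁰ (on a common probability space) and any constant a > 0, sup_y | P(X⁰ + Y⁰ ≤ y) − H(y) | ≤ sup_y | P(X⁰ ≤ y) − H(y) | + α·a + P(|Y⁰| ≥ a). -/
import Mathlib


open MeasureTheory Filter Set

noncomputable section

private lemma toReal_union_bound {Ω : Type*} [MeasurableSpace Ω] (μ : Measure Ω)
    [IsProbabilityMeasure μ] {A B C : Set Ω} (h : A ⊆ B ∪ C) :
    (μ A).toReal ≤ (μ B).toReal + (μ C).toReal := by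
  have h1 : μ A ≤ μ B + μ C := le_trans (measure_mono h) (measure_union_le B C)
  have h2 : (μ A).toReal ≤ (μ B + μ C).toReal :=
    ENNReal.toReal_mono (by finiteness) h1
  rwa [ENNReal.toReal_add (measure_ne_top μ B) (measure_ne_top μ C)] at h2

/-- **Lemma (smoothing inequality).**
Let `H : ℝ → ℝ` be a bounded Lipschitz function with Lipschitz constant `α`. Then for
any real-valued random variables `X⁰`, `Y⁰` on a common probability space and any
constant `a > 0`,
`sup_y |P(X⁰ + Y⁰ ≤ y) − H(y)| ≤ sup_y |P(X⁰ ≤ y) − H(y)| + α·a + P(|Y⁰| ≥ a)`. -/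
theorem smoothing_inequality
    {Ω : Type*} [MeasurableSpace Ω] (μ : Measure Ω) [IsProbabilityMeasure μ]
    (X Y : Ω → ℝ) (hX : Measurable X) (hY : Measurable Y)
    (H : ℝ → ℝ) (α : ℝ)
    (hbdd : ∃ Cb : ℝ, ∀ y : ℝ, |H y| ≤ Cb)
    (hLip : ∀ y y' : ℝ, |H y - H y'| ≤ α * |y - y'|)
    (a : ℝ) (ha : 0 < a) :
    (⨆ y : ℝ, |(μ {ω | X ω + Y ω ≤ y}).toReal - H y|) ≤
      (⨆ y : ℝ, |(μ {ω | X ω ≤ y}).toReal - H y|) + α * a +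
        (μ {ω | a ≤ |Y ω|}).toReal := by
  obtain ⟨Cb, hCb⟩ := hbdd
  set T : ℝ := (μ {ω | a ≤ |Y ω|}).toReal with hT
  have hT0 : 0 ≤ T := ENNReal.toReal_nonneg
  have hα : 0 ≤ α := by
    have := hLip 0 1
    simp at this
    nlinarith [abs_nonneg (H 0 - H 1)]
  -- the family y ↦ |P(X ≤ y) - H y| is bounded above
  have hb : BddAbove (Set.range fun y : ℝ => |(μ {ω | X ω ≤ y}).toReal - H y|) := by
    refine ⟨1 + Cb, ?_⟩
    rintro _ ⟨y, rfl⟩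
    have h1 : (μ {ω | X ω ≤ y}).toReal ≤ 1 := by
      have := prob_le_one (μ := μ) (s := {ω | X ω ≤ y})
      exact ENNReal.toReal_le_of_le_ofReal one_pos.le (by simpa using this)
    have := hCb y
    have h0 : 0 ≤ (μ {ω | X ω ≤ y}).toReal := ENNReal.toReal_nonneg
    show |(μ {ω | X ω ≤ y}).toReal - H y| ≤ 1 + Cb
    rw [abs_sub_comm]
    calc |H y - (μ {ω | X ω ≤ y}).toReal| ≤ |H y| + |(μ {ω | X ω ≤ y}).toReal| :=
          abs_sub _ _
      _ ≤ Cb + 1 := add_le_add this (by rwa [abs_of_nonneg h0])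
      _ = 1 + Cb := by ring
  set S : ℝ := ⨆ y : ℝ, |(μ {ω | X ω ≤ y}).toReal - H y| with hS
  have hSy : ∀ y : ℝ, |(μ {ω | X ω ≤ y}).toReal - H y| ≤ S := fun y =>
    le_ciSup hb y
  refine ciSup_le fun y => ?_
  have hprob1 : (μ {ω | X ω + Y ω ≤ y}).toReal ≤
      (μ {ω | X ω ≤ y + a}).toReal + T := by
    refine toReal_union_bound μ ?_
    intro ω hω
    by_cases hc : a ≤ |Y ω|
    · exact Or.inr hc
    · left
      push_neg at hc
      have : -(Y ω) ≤ a := by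
        have := neg_abs_le (Y ω); linarith [hc]
      simp only [Set.mem_setOf_eq] at hω ⊢
      linarith
  have hprob2 : (μ {ω | X ω ≤ y - a}).toReal ≤
      (μ {ω | X ω + Y ω ≤ y}).toReal + T := by
    refine toReal_union_bound μ ?_
    intro ω hω
    by_cases hc : a ≤ |Y ω|
    · exact Or.inr hc
    · left
      push_neg at hc
      have : Y ω < a := lt_of_le_of_lt (le_abs_self _) hc
      simp only [Set.mem_setOf_eq] at hω ⊢
      linarith
  have hH1 : |H (y + a) - H y| ≤ α * a := by
    have := hLip (y + a) y
    simpa [abs_of_pos ha] using this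
  have hH2 : |H (y - a) - H y| ≤ α * a := by
    have := hLip (y - a) y
    have h : |y - a - y| = a := by
      rw [show y - a - y = -a by ring, abs_neg, abs_of_pos ha]
    rwa [h] at this
  have hS1 := hSy (y + a)
  have hS2 := hSy (y - a)
  rw [abs_le] at hS1 hS2 hH1 hH2 ⊢
  constructor
  · linarith [hS2.1, hH2.1, hH2.2]
  · linarith [hS1.2, hH1.1, hH1.2]
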